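/- Let f : I → (0,1] be continuously differentiable with the derivative of 1/f bounded by M on the interval I. Then the curve γ_f(t) := (1 − f(t))δ₀ + f(t)λ_{[−1,0]} in P₂(ℝ) is Lipschitz continuous with respect to the Wasserstein-2 distance with constant M/√3, i.e., W₂(γ_f(t₁), γ_f(t₂)) ≤ (M/√3)|t₁ − t₂| for all t₁, t₂ ∈ I. -/

import Mathlib

open MeasureTheory

/-- `π` is a coupling of `μ` and `ν`. -/
def IsCoupling {E : Type*} [MeasurableSpace E] (μ ν : Measure E) (π : Measure (E × E)) : Prop :=
  IsProbabilityMeasure π ∧ π.fst = μ ∧ π.snd = ν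

/-- Wasserstein-2 distance (as infimum of quadratic costs over couplings, then square root). -/
noncomputable def W2 {E : Type*} [MeasurableSpace E] [NormedAddCommGroup E]
    (μ ν : Measure E) : ℝ :=
  Real.sqrt (sInf {r | ∃ π : Measure (E × E), IsCoupling μ ν π ∧ r = ∫ p, ‖p.1 - p.2‖ ^ 2 ∂π})

/-- The curve `γ_f(t) = (1 - f(t)) δ₀ + f(t) λ_{[-1,0]}` in `P₂(ℝ)`. -/
noncomputable def gammaCurve (f : ℝ → ℝ) (t : ℝ) : Measure ℝ :=
  ENNReal.ofReal (1 - f t) • Measure.dirac 0 +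
    ENNReal.ofReal (f t) • volume.restrict (Set.Icc (-1 : ℝ) 0)

/-!
Both endpoints are push-forwards of the uniform distribution on `(0, 1]` under their quantile
functions `s ↦ min (s / c - 1) 0`, which gives a coupling of `γ_f(t₁)` and `γ_f(t₂)`.
The two quantile functions differ by at most `s |1/f(t₁) - 1/f(t₂)|` at `s`, so the cost of this
coupling is at most `|1/f(t₁) - 1/f(t₂)|² / 3`, and the mean value theorem bounds
`|1/f(t₁) - 1/f(t₂)|` by `M |t₁ - t₂|`.
-/

open Set

section Coupling

variable {E : Type*} [MeasurableSpace E]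

lemma isCoupling_map_prodMk {Ω : Type*} [MeasurableSpace Ω] (ρ : Measure Ω)
    [IsProbabilityMeasure ρ] {X Y : Ω → E} (hX : Measurable X) (hY : Measurable Y) :
    IsCoupling (ρ.map X) (ρ.map Y) (ρ.map fun ω => (X ω, Y ω)) :=
  ⟨Measure.isProbabilityMeasure_map (hX.prodMk hY).aemeasurable,
    Measure.fst_map_prodMk hY, Measure.snd_map_prodMk hX⟩

variable [NormedAddCommGroup E]

lemma W2_le_of_isCoupling {μ ν : Measure E} {π : Measure (E × E)} (hπ : IsCoupling μ ν π) :
    W2 μ ν ≤ Real.sqrt (∫ p, ‖p.1 - p.2‖ ^ 2 ∂π) := by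
  refine Real.sqrt_le_sqrt (csInf_le ⟨0, ?_⟩ ⟨π, hπ, rfl⟩)
  rintro r ⟨π', -, rfl⟩
  exact integral_nonneg fun p => by positivity

lemma W2_map_le [OpensMeasurableSpace E] [SecondCountableTopology E] {Ω : Type*}
    [MeasurableSpace Ω] (ρ : Measure Ω) [IsProbabilityMeasure ρ] {X Y : Ω → E}
    (hX : Measurable X) (hY : Measurable Y) :
    W2 (ρ.map X) (ρ.map Y) ≤ Real.sqrt (∫ ω, ‖X ω - Y ω‖ ^ 2 ∂ρ) := by
  refine (W2_le_of_isCoupling (isCoupling_map_prodMk ρ hX hY)).trans_eq ?_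
  rw [integral_map (hX.prodMk hY).aemeasurable (by fun_prop)]

end Coupling

noncomputable def gammaQuantile (c s : ℝ) : ℝ := min (s / c - 1) 0

lemma map_div_sub_one_restrict_Ioc {c : ℝ} (hc : 0 < c) :
    (volume.restrict (Ioc 0 c)).map (fun s => s / c - 1) =
      ENNReal.ofReal c • volume.restrict (Icc (-1 : ℝ) 0) := by
  have hpre : (fun s : ℝ => s / c - 1) ⁻¹' Ioc (-1) 0 = Ioc 0 c := by
    ext s
    simp only [mem_preimage, mem_Ioc, sub_le_iff_le_add, zero_add, div_le_one hc,
      neg_lt_sub_iff_lt_add, lt_add_iff_pos_right, div_pos_iff_of_pos_right hc]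
  have hmap : volume.map (fun s : ℝ => s / c - 1) = ENNReal.ofReal c • volume := by
    have hcomp : (fun s : ℝ => s / c - 1) = (fun x => x + (-1)) ∘ (fun x => c⁻¹ * x) := by
      ext x; simp [div_eq_inv_mul, sub_eq_add_neg]
    rw [hcomp, ← Measure.map_map (by fun_prop) (by fun_prop),
      Real.map_volume_mul_left (inv_ne_zero hc.ne'), inv_inv, Measure.map_smul,
      map_add_right_eq_self volume (-1), abs_of_pos hc]
  rw [← hpre, ← Measure.restrict_map (by fun_prop) measurableSet_Ioc, hmap,
    Measure.restrict_smul, restrict_Ioc_eq_restrict_Icc]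

lemma map_gammaQuantile {c : ℝ} (hc : c ∈ Ioc (0 : ℝ) 1) :
    (volume.restrict (Ioc (0 : ℝ) 1)).map (gammaQuantile c) =
      ENNReal.ofReal (1 - c) • Measure.dirac 0 +
        ENNReal.ofReal c • volume.restrict (Icc (-1 : ℝ) 0) := by
  obtain ⟨hc0, hc1⟩ := hc
  have hsplit : volume.restrict (Ioc (0 : ℝ) 1) =
      volume.restrict (Ioc 0 c) + volume.restrict (Ioc c 1) := by
    rw [← Measure.restrict_union (Ioc_disjoint_Ioc_of_le le_rfl) measurableSet_Ioc,
      Ioc_union_Ioc_eq_Ioc hc0.le hc1]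
  have hlow : gammaQuantile c =ᵐ[volume.restrict (Ioc 0 c)] fun s => s / c - 1 := by
    filter_upwards [ae_restrict_mem measurableSet_Ioc] with s hs
    exact min_eq_left (sub_nonpos.2 ((div_le_one hc0).2 hs.2))
  have hhigh : gammaQuantile c =ᵐ[volume.restrict (Ioc c 1)] fun _ => 0 := by
    filter_upwards [ae_restrict_mem measurableSet_Ioc] with s hs
    exact min_eq_right (sub_nonneg.2 ((one_le_div hc0).2 hs.1.le))
  rw [hsplit, Measure.map_add _ _ (by unfold gammaQuantile; fun_prop), Measure.map_congr hlow,
    Measure.map_congr hhigh, map_div_sub_one_restrict_Ioc hc0, Measure.map_const, add_comm]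
  simp [Real.volume_Ioc]

lemma abs_gammaQuantile_sub_le (a b : ℝ) {s : ℝ} (hs : 0 ≤ s) :
    |gammaQuantile a s - gammaQuantile b s| ≤ s * |a⁻¹ - b⁻¹| := by
  have hdiff : s / a - 1 - (s / b - 1) = s * (a⁻¹ - b⁻¹) := by ring
  calc |gammaQuantile a s - gammaQuantile b s|
      ≤ max |s / a - 1 - (s / b - 1)| |(0 : ℝ) - 0| := abs_min_sub_min_le_max _ _ _ _
    _ = s * |a⁻¹ - b⁻¹| := by rw [sub_self, abs_zero, hdiff, abs_mul, abs_of_nonneg hs,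
        max_eq_left (by positivity)]

lemma integral_sq_gammaQuantile_sub_le (a b : ℝ) :
    ∫ s in Ioc (0 : ℝ) 1, (gammaQuantile a s - gammaQuantile b s) ^ 2 ≤ (a⁻¹ - b⁻¹) ^ 2 / 3 := by
  calc ∫ s in Ioc (0 : ℝ) 1, (gammaQuantile a s - gammaQuantile b s) ^ 2
      ≤ ∫ s in Ioc (0 : ℝ) 1, (a⁻¹ - b⁻¹) ^ 2 * s ^ 2 := by
        refine setIntegral_mono_on ?_ ?_ measurableSet_Ioc fun s hs => ?_
        · exact Continuous.integrableOn_Ioc (by unfold gammaQuantile; fun_prop)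
        · exact Continuous.integrableOn_Ioc (by fun_prop)
        · rw [← sq_abs, ← sq_abs (a⁻¹ - b⁻¹), ← mul_pow, mul_comm]
          exact pow_le_pow_left₀ (abs_nonneg _) (abs_gammaQuantile_sub_le a b hs.1.le) 2
    _ = (a⁻¹ - b⁻¹) ^ 2 / 3 := by
        rw [← intervalIntegral.integral_of_le zero_le_one, intervalIntegral.integral_const_mul,
          integral_pow]
        ring

lemma W2_gammaCurve_le (f : ℝ → ℝ) {t₁ t₂ : ℝ} (h₁ : f t₁ ∈ Ioc (0 : ℝ) 1)
    (h₂ : f t₂ ∈ Ioc (0 : ℝ) 1) :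
    W2 (gammaCurve f t₁) (gammaCurve f t₂) ≤ |(f t₁)⁻¹ - (f t₂)⁻¹| / Real.sqrt 3 := by
  have : IsProbabilityMeasure (volume.restrict (Ioc (0 : ℝ) 1)) := ⟨by simp [Real.volume_Ioc]⟩
  have hQ (c : ℝ) : Measurable (gammaQuantile c) := by unfold gammaQuantile; fun_prop
  calc W2 (gammaCurve f t₁) (gammaCurve f t₂)
      ≤ Real.sqrt
          (∫ s in Ioc (0 : ℝ) 1, ‖gammaQuantile (f t₁) s - gammaQuantile (f t₂) s‖ ^ 2) := by
        rw [gammaCurve, gammaCurve, ← map_gammaQuantile h₁, ← map_gammaQuantile h₂]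
        exact W2_map_le _ (hQ _) (hQ _)
    _ ≤ Real.sqrt (((f t₁)⁻¹ - (f t₂)⁻¹) ^ 2 / 3) := by
        simp only [Real.norm_eq_abs, sq_abs]
        exact Real.sqrt_le_sqrt (integral_sq_gammaQuantile_sub_le _ _)
    _ = |(f t₁)⁻¹ - (f t₂)⁻¹| / Real.sqrt 3 := by
        rw [Real.sqrt_div (sq_nonneg _), Real.sqrt_sq_eq_abs]

theorem gammaCurve_lipschitz_general (I : Set ℝ) (hI : I.OrdConnected) (f : ℝ → ℝ)
    (hrange : ∀ t ∈ I, f t ∈ Set.Ioc (0 : ℝ) 1)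
    (g' : ℝ → ℝ) (hg : ∀ t ∈ I, HasDerivWithinAt (fun s => (f s)⁻¹) (g' t) I t)
    (M : ℝ) (hM : ∀ t ∈ I, |g' t| ≤ M) :
    ∀ t₁ ∈ I, ∀ t₂ ∈ I,
      W2 (gammaCurve f t₁) (gammaCurve f t₂) ≤ M / Real.sqrt 3 * |t₁ - t₂| := by
  intro t₁ ht₁ t₂ ht₂
  have hmvt : |(f t₁)⁻¹ - (f t₂)⁻¹| ≤ M * |t₁ - t₂| :=
    hI.convex.norm_image_sub_le_of_norm_hasDerivWithin_le hg hM ht₂ ht₁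
  calc W2 (gammaCurve f t₁) (gammaCurve f t₂)
      ≤ |(f t₁)⁻¹ - (f t₂)⁻¹| / Real.sqrt 3 := W2_gammaCurve_le f (hrange t₁ ht₁) (hrange t₂ ht₂)
    _ ≤ M * |t₁ - t₂| / Real.sqrt 3 := by gcongr
    _ = M / Real.sqrt 3 * |t₁ - t₂| := by ring

/-- If `f : I → (0,1]` is continuously differentiable on the interval `I` with the derivative
of `1/f` bounded by `M` on `I`, then `t ↦ γ_f(t)` is Lipschitz in Wasserstein-2 with constant
`M/√3`: `W₂(γ_f(t₁), γ_f(t₂)) ≤ (M/√3)|t₁ - t₂|` for all `t₁, t₂ ∈ I`. -/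
theorem gammaCurve_lipschitz (I : Set ℝ) (hI : I.OrdConnected) (f : ℝ → ℝ)
    (hf : ContDiffOn ℝ 1 f I) (hrange : ∀ t ∈ I, f t ∈ Set.Ioc (0 : ℝ) 1)
    (g' : ℝ → ℝ) (hg : ∀ t ∈ I, HasDerivWithinAt (fun s => (f s)⁻¹) (g' t) I t)
    (M : ℝ) (hM : ∀ t ∈ I, |g' t| ≤ M) :
    ∀ t₁ ∈ I, ∀ t₂ ∈ I,
      W2 (gammaCurve f t₁) (gammaCurve f t₂) ≤ M / Real.sqrt 3 * |t₁ - t₂| :=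
  gammaCurve_lipschitz_general I hI f hrange g' hg M hM
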